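/- arXiv:math/0403512 — 3 statements merged into one kernel-verified Lean document; each statement's English description precedes it below -/
import Mathlib

section
/- The first prolongation of the Lie algebra 𝔲(n, A) vanishes: if T : ℝ²ⁿ → 𝔲(n, A) is a linear map such that T(u)v = T(v)u for all u, v ∈ ℝ²ⁿ (i.e., T is a symmetric element of the first prolongation), then T = 0. -/
open Matrix

/-- the first prolongation of the paraunitary Lie algebra `𝔲(n,𝐀)`
vanishes: any linear `T : ℝ²ⁿ → 𝔲(n,𝐀)` with `T(u)v = T(v)u` for all `u,v` is zero. -/
theorem stmt_7 (n : ℕ)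
    (T : ((Fin n ⊕ Fin n) → ℝ) →ₗ[ℝ] Matrix (Fin n ⊕ Fin n) (Fin n ⊕ Fin n) ℝ)
    (hmem : ∀ u : (Fin n ⊕ Fin n) → ℝ, ∃ A : Matrix (Fin n) (Fin n) ℝ,
      T u = Matrix.fromBlocks A 0 0 (-Aᵀ))
    (hsymm : ∀ u v : (Fin n ⊕ Fin n) → ℝ, (T u).mulVec v = (T v).mulVec u) :
    T = 0 := by
  have key : ∀ i, T (Pi.single i 1) = 0 := by
    intro i
    cases i with
    | inl p =>
      obtain ⟨A, hA⟩ := hmem (Pi.single (Sum.inl p) 1)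
      have hA0 : A = 0 := by
        ext q i
        have h := congrFun (hsymm (Pi.single (Sum.inl p) 1) (Pi.single (Sum.inr q) 1)) (Sum.inr i)
        obtain ⟨B, hB⟩ := hmem (Pi.single (Sum.inr q) 1)
        rw [hA, hB] at h
        simpa [mulVec, dotProduct, Pi.single_apply, Fintype.sum_sum_type,
          neg_eq_zero, eq_comm] using h
      rw [hA, hA0]; simp
    | inr q =>
      obtain ⟨B, hB⟩ := hmem (Pi.single (Sum.inr q) 1)
      have hB0 : B = 0 := by
        ext i p
        have h := congrFun (hsymm (Pi.single (Sum.inr q) 1) (Pi.single (Sum.inl p) 1)) (Sum.inl i)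
        obtain ⟨A, hA⟩ := hmem (Pi.single (Sum.inl p) 1)
        rw [hA, hB] at h
        simpa [mulVec, dotProduct, Pi.single_apply, Fintype.sum_sum_type] using h
      rw [hB, hB0]; simp
  apply (Pi.basisFun ℝ (Fin n ⊕ Fin n)).ext
  intro i
  simpa [Pi.basisFun_apply] using key i
end

section
/- With the same setup (F a (1,1)-tensor with vanishing Nijenhuis torsion, bracket [X,Y]_F = [FX,Y] + [X,FY] - F([X,Y])), for any smooth function f and vector fields X, Y one has [X, fY]_F = f[X,Y]_F + (F(X))(f) · Y. Consequently (TM, [·,·]_F, F) is a Lie algebroid with anchor F. -/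
lemma lie_fsmul {R A : Type*} [CommRing R] [CommRing A] [Algebra R A]
    (f : A) (X Y : Derivation R A A) : ⁅X, f • Y⁆ = f • ⁅X, Y⁆ + X f • Y := by
  ext a
  simp only [Derivation.commutator_apply, Derivation.add_apply, Derivation.smul_apply,
    Derivation.leibniz, smul_eq_mul]
  ring

/-- with vector fields formalized as derivations of the algebra `A`
of smooth functions and `F` a (1,1)-tensor field with vanishing Nijenhuis torsion,
the bracket `[X,Y]_F = [FX,Y] + [X,FY] - F([X,Y])` satisfies the Leibniz rule
`[X, f•Y]_F = f•[X,Y]_F + (FX)(f)•Y`, and `F` is a bracket homomorphism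
`F([X,Y]_F) = [FX,FY]`; hence `(TM, [·,·]_F, F)` is a Lie algebroid with anchor `F`. -/
theorem stmt_12 {R A : Type*} [CommRing R] [CommRing A] [Algebra R A]
    (F : Derivation R A A →ₗ[A] Derivation R A A)
    (hF2 : ∀ X, F (F X) = X)
    (hNF : ∀ X Y : Derivation R A A,
      ⁅F X, F Y⁆ - F ⁅F X, Y⁆ - F ⁅X, F Y⁆ + F (F ⁅X, Y⁆) = 0) :
    (∀ (f : A) (X Y : Derivation R A A),
      ⁅F X, f • Y⁆ + ⁅X, F (f • Y)⁆ - F ⁅X, f • Y⁆ =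
        f • (⁅F X, Y⁆ + ⁅X, F Y⁆ - F ⁅X, Y⁆) + (F X) f • Y) ∧
    (∀ X Y : Derivation R A A,
      F (⁅F X, Y⁆ + ⁅X, F Y⁆ - F ⁅X, Y⁆) = ⁅F X, F Y⁆) := by
  constructor
  · intro f X Y
    rw [map_smul, lie_fsmul, lie_fsmul, lie_fsmul, map_add, map_smul, map_smul]
    simp only [smul_add, smul_sub]
    abel
  · intro X Y
    have h := hNF X Y
    rw [map_sub, map_add]
    linear_combination (norm := abel) -h
end

section
/- Let G be an abelian Lie group with a left-invariant Riemannian metric ⟨·,·⟩. On the product group G × G, define g((v_a, v_b), (w_a, w_b)) = ⟨(L_{a⁻¹})_* v_a, (L_{b⁻¹})_* w_b⟩ + ⟨(L_{a⁻¹})_* w_a, (L_{b⁻¹})_* v_b⟩ at each point (a,b). Then g is a pseudo-Riemannian metric of neutral signature (n,n), the two foliations by factors {a}×G and G×{b} are g-isotropic, and the associated 2-form ω(X,Y) = g(FX,Y) (with F = id on T({a}×G)-direction and -id on the other) is closed, so G × G is a bi-Lagrangian manifold. -/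
/-!
Via `B`, the metric `g` on `𝔤 × 𝔤` is the split form `((f, x), (f', x')) ↦ f x' + f' x` on
`𝔤* × 𝔤`, so both factors are isotropic, while `g (x, ±x) (x, ±x) = ±2 B(x, x)` makes the
diagonal positive and the antidiagonal negative definite, two `g`-orthogonal complements of
dimension `n`. For left-invariant `ω` and left-invariant fields the Koszul formula for `dω`
only involves brackets, which vanish since `G` is abelian.
-/

open Module
open LinearMap (BilinForm)

namespace Submodule

variable (R M : Type*) [CommRing R] [AddCommGroup M] [Module R M]

def diagonal : Submodule R (M × M) :=
  LinearMap.range (LinearMap.id.prod LinearMap.id)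

def antidiagonal : Submodule R (M × M) :=
  LinearMap.range (LinearMap.id.prod (-LinearMap.id))

variable {R M}

theorem mem_diagonal {u : M × M} : u ∈ diagonal R M ↔ ∃ x, (x, x) = u :=
  Iff.rfl

theorem mem_antidiagonal {u : M × M} : u ∈ antidiagonal R M ↔ ∃ x, (x, -x) = u :=
  Iff.rfl

theorem finrank_diagonal : finrank R (diagonal R M) = finrank R M :=
  LinearMap.finrank_range_of_inj fun _ _ h => congrArg Prod.fst h

theorem finrank_antidiagonal : finrank R (antidiagonal R M) = finrank R M :=
  LinearMap.finrank_range_of_inj fun _ _ h => congrArg Prod.fst h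

theorem isCompl_diagonal_antidiagonal [Invertible (2 : R)] :
    IsCompl (diagonal R M) (antidiagonal R M) := by
  have half : ∀ z : M, (⅟2 : R) • (z + z) = z := fun z => by
    rw [← two_smul R, smul_smul, invOf_mul_self, one_smul]
  constructor
  · rw [disjoint_iff, eq_bot_iff]
    rintro u ⟨hu, hu'⟩
    obtain ⟨x, rfl⟩ := mem_diagonal.1 hu
    obtain ⟨y, hy⟩ := mem_antidiagonal.1 hu'
    obtain ⟨rfl, hneg⟩ := Prod.mk.inj hy
    have hy0 : y = 0 := by
      rw [← half y]
      nth_rewrite 1 [← hneg]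
      rw [neg_add_cancel, smul_zero]
    simp [hy0]
  · rw [codisjoint_iff, eq_top_iff]
    rintro ⟨a, b⟩ -
    have hsplit : ((a, b) : M × M) = ((⅟2 : R) • (a + b), (⅟2 : R) • (a + b)) +
        ((⅟2 : R) • (a - b), -((⅟2 : R) • (a - b))) := by
      refine Prod.ext ?_ ?_
      · rw [Prod.fst_add, ← smul_add, show a + b + (a - b) = a + a by abel, half]
      · rw [Prod.snd_add, ← smul_neg, ← smul_add, show a + b + -(a - b) = b + b by abel, half]
    rw [hsplit]
    exact add_mem_sup ⟨_, rfl⟩ ⟨_, rfl⟩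

end Submodule

namespace LinearMap.BilinForm

open Submodule

variable {R M : Type*} [CommRing R] [AddCommGroup M] [Module R M]

def hyperbolic (B : BilinForm R M) : BilinForm R (M × M) :=
  B.compl₁₂ (fst R M M) (snd R M M) + (B.compl₁₂ (fst R M M) (snd R M M)).flip

@[simp]
theorem hyperbolic_apply (B : BilinForm R M) (u v : M × M) :
    B.hyperbolic u v = B u.1 v.2 + B v.1 u.2 :=
  rfl

theorem isSymm_hyperbolic (B : BilinForm R M) : B.hyperbolic.IsSymm :=
  ⟨fun _ _ => add_comm _ _⟩

theorem nondegenerate_of_anisotropic {B : BilinForm R M} (hB : ∀ x, B x x = 0 → x = 0) :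
    B.Nondegenerate :=
  ⟨fun x hx => hB x (hx x), fun y hy => hB y (hy y)⟩

theorem separatingLeft_hyperbolic {B : BilinForm R M} (hB : B.Nondegenerate) :
    B.hyperbolic.SeparatingLeft := by
  intro u hu
  ext
  · exact hB.1 u.1 fun y => by simpa using hu (0, y)
  · exact hB.2 u.2 fun x => by simpa using hu (x, 0)

theorem hyperbolic_diagonal_antidiagonal {B : BilinForm R M} (hB : B.IsSymm) {u v : M × M}
    (hu : u ∈ diagonal R M) (hv : v ∈ antidiagonal R M) : B.hyperbolic u v = 0 := by
  obtain ⟨x, rfl⟩ := mem_diagonal.1 hu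
  obtain ⟨y, rfl⟩ := mem_antidiagonal.1 hv
  simp [hB.eq y x]

section Signature

variable [PartialOrder R] [IsStrictOrderedRing R] {B : BilinForm R M}

theorem hyperbolic_pos_of_mem_diagonal (hB : ∀ x, x ≠ 0 → 0 < B x x) {u : M × M}
    (hu : u ∈ diagonal R M) (hu0 : u ≠ 0) : 0 < B.hyperbolic u u := by
  obtain ⟨x, rfl⟩ := mem_diagonal.1 hu
  have hx : x ≠ 0 := by rintro rfl; exact hu0 rfl
  simpa using add_pos (hB x hx) (hB x hx)

theorem hyperbolic_neg_of_mem_antidiagonal (hB : ∀ x, x ≠ 0 → 0 < B x x) {u : M × M}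
    (hu : u ∈ antidiagonal R M) (hu0 : u ≠ 0) : B.hyperbolic u u < 0 := by
  obtain ⟨x, rfl⟩ := mem_antidiagonal.1 hu
  have hx : x ≠ 0 := by rintro rfl; exact hu0 (by simp)
  simp only [hyperbolic_apply, map_neg]
  rw [← neg_add, neg_lt_zero]
  exact add_pos (hB x hx) (hB x hx)

end Signature

end LinearMap.BilinForm

namespace LieAlgebra

variable {R L : Type*} [CommRing R] [LieRing L] [Module R L]

/-- `dω (u, v, w)` for left-invariant `ω`, `u`, `v`, `w`: the derivative terms of the Koszul
formula drop out because `ω (v, w)` etc. are constant. -/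
def invariantExtDeriv (ω : L →ₗ[R] L →ₗ[R] R) (u v w : L) : R :=
  -ω ⁅u, v⁆ w - ω ⁅v, w⁆ u - ω ⁅w, u⁆ v

theorem invariantExtDeriv_eq_zero [IsLieAbelian L] (ω : L →ₗ[R] L →ₗ[R] R) (u v w : L) :
    invariantExtDeriv ω u v w = 0 := by
  simp only [invariantExtDeriv, trivial_lie_zero, map_zero, LinearMap.zero_apply, neg_zero,
    sub_zero]

end LieAlgebra

open LinearMap.BilinForm Submodule in
theorem stmt_16_general {G : Type*} [LieRing G] [LieAlgebra ℝ G]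
    (n : ℕ) (hdim : Module.finrank ℝ G = n)
    (habel : ∀ X Y : G, ⁅X, Y⁆ = 0)
    (B : G →ₗ[ℝ] G →ₗ[ℝ] ℝ)
    (hBsymm : ∀ X Y, B X Y = B Y X)
    (hBpos : ∀ X : G, X ≠ 0 → 0 < B X X)
    (g : (G × G) →ₗ[ℝ] (G × G) →ₗ[ℝ] ℝ)
    (hgdef : ∀ u v : G × G, g u v = B u.1 v.2 + B v.1 u.2)
    (ω : (G × G) →ₗ[ℝ] (G × G) →ₗ[ℝ] ℝ) :
    (∀ u v, g u v = g v u) ∧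
    (∀ u, (∀ v, g u v = 0) → u = 0) ∧
    (∃ P N : Submodule ℝ (G × G), Module.finrank ℝ P = n ∧ Module.finrank ℝ N = n ∧
      IsCompl P N ∧ (∀ u ∈ P, u ≠ 0 → 0 < g u u) ∧ (∀ u ∈ N, u ≠ 0 → g u u < 0) ∧
      (∀ u ∈ P, ∀ v ∈ N, g u v = 0)) ∧
    (∀ X X' : G, g (X, 0) (X', 0) = 0) ∧
    (∀ Y Y' : G, g ((0 : G), Y) ((0 : G), Y') = 0) ∧
    (∀ u v w : G × G,
      -ω (⁅u.1, v.1⁆, ⁅u.2, v.2⁆) w - ω (⁅v.1, w.1⁆, ⁅v.2, w.2⁆) u -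
        ω (⁅w.1, u.1⁆, ⁅w.2, u.2⁆) v = 0) := by
  have hg : g = hyperbolic B := LinearMap.ext₂ hgdef
  subst hg
  have hBnd : B.Nondegenerate :=
    nondegenerate_of_anisotropic fun x hx => by_contra fun h => (hBpos x h).ne' hx
  have : IsLieAbelian (G × G) := ⟨fun u v => Prod.ext (habel _ _) (habel _ _)⟩
  refine ⟨(isSymm_hyperbolic B).eq, separatingLeft_hyperbolic hBnd, ?_, fun _ _ => by simp,
    fun _ _ => by simp, LieAlgebra.invariantExtDeriv_eq_zero ω⟩
  exact ⟨diagonal ℝ G, antidiagonal ℝ G, finrank_diagonal.trans hdim,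
    finrank_antidiagonal.trans hdim, isCompl_diagonal_antidiagonal,
    fun _ => hyperbolic_pos_of_mem_diagonal hBpos,
    fun _ => hyperbolic_neg_of_mem_antidiagonal hBpos,
    fun _ hu _ hv => hyperbolic_diagonal_antidiagonal ⟨hBsymm⟩ hu hv⟩

/-- formalized at the Lie-algebra level via left-invariant objects,
`𝔤` the Lie algebra of the abelian group `G` with inner product `B` giving the
left-invariant metric: on `𝔤 × 𝔤` (the left-invariant vector fields of `G × G`),
the metric `g((X,Y),(X',Y')) = B(X,Y') + B(X',Y)` is symmetric, nondegenerate, of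
neutral signature `(n,n)`, both factor distributions `𝔤 ⊕ 0` and `0 ⊕ 𝔤` are
`g`-isotropic, and the 2-form `ω(u,v) = g(Fu,v)` (with `F = id` on the `{a}×G`
direction `0 ⊕ 𝔤` and `F = -id` on `𝔤 ⊕ 0`) is closed — `dω` is computed on
left-invariant fields by the invariant formula, using the componentwise bracket of
the product Lie algebra. Hence `G × G` is bi-Lagrangian. -/
theorem stmt_16 {G : Type*} [LieRing G] [LieAlgebra ℝ G] [FiniteDimensional ℝ G]
    (n : ℕ) (hdim : Module.finrank ℝ G = n)
    (habel : ∀ X Y : G, ⁅X, Y⁆ = 0)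
    (B : G →ₗ[ℝ] G →ₗ[ℝ] ℝ)
    (hBsymm : ∀ X Y, B X Y = B Y X)
    (hBpos : ∀ X : G, X ≠ 0 → 0 < B X X)
    (g : (G × G) →ₗ[ℝ] (G × G) →ₗ[ℝ] ℝ)
    (hgdef : ∀ u v : G × G, g u v = B u.1 v.2 + B v.1 u.2)
    (F : (G × G) →ₗ[ℝ] (G × G))
    (hFdef : ∀ u : G × G, F u = (-u.1, u.2))
    (ω : (G × G) →ₗ[ℝ] (G × G) →ₗ[ℝ] ℝ)
    (hωdef : ∀ u v : G × G, ω u v = g (F u) v) :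
    (∀ u v, g u v = g v u) ∧
    (∀ u, (∀ v, g u v = 0) → u = 0) ∧
    (∃ P N : Submodule ℝ (G × G), Module.finrank ℝ P = n ∧ Module.finrank ℝ N = n ∧
      IsCompl P N ∧ (∀ u ∈ P, u ≠ 0 → 0 < g u u) ∧ (∀ u ∈ N, u ≠ 0 → g u u < 0) ∧
      (∀ u ∈ P, ∀ v ∈ N, g u v = 0)) ∧
    (∀ X X' : G, g (X, 0) (X', 0) = 0) ∧
    (∀ Y Y' : G, g ((0 : G), Y) ((0 : G), Y') = 0) ∧
    (∀ u v w : G × G,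
      -ω (⁅u.1, v.1⁆, ⁅u.2, v.2⁆) w - ω (⁅v.1, w.1⁆, ⁅v.2, w.2⁆) u -
        ω (⁅w.1, u.1⁆, ⁅w.2, u.2⁆) v = 0) :=
  stmt_16_general n hdim habel B hBsymm hBpos g hgdef ω
end
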